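/- Assume α > 2θ ≥ 0, δ ≥ 0, and let λ± (ξ) = (|ξ|^{2θ}/(2(1+|ξ|^{2δ}))) ( -1 ± √(1 - 4|ξ|^{2(α-2θ)}(1+|ξ|^{2δ})) ). Then there exist constants c₁, c₂, C₁, C₂ > 0 and ρ ∈ (0,1] such that for all 0 < |ξ| ≤ ρ: c₁ |ξ|^{2(α-θ)} ≤ -λ₊(ξ) ≤ C₁ |ξ|^{2(α-θ)} and c₂ |ξ|^{2θ} ≤ -λ₋(ξ) ≤ C₂ |ξ|^{2θ}. -/

import Mathlib

/-!
Write `a = |ξ|^{2θ}`, `b = 1 + |ξ|^{2δ} ∈ [1, 2]` and `x = 4|ξ|^{2(α-2θ)} b`, which is at most `1`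
once `|ξ|` is small because `α > 2θ`. Then `-λ₋ = a (1 + √(1 - x)) / (2b)` lies between `a/4` and `a`,
while `-λ₊ = a (1 - √(1 - x)) / (2b)` and the first-order bound `x/2 ≤ 1 - √(1 - x) ≤ x` give
`|ξ|^{2(α-θ)} = a x / (4b) ≤ -λ₊ ≤ 2 |ξ|^{2(α-θ)}`.
-/

open Real

lemma one_sub_sqrt_one_sub_mem_Icc {x : ℝ} (hx₀ : 0 ≤ x) (hx₁ : x ≤ 1) :
    1 - √(1 - x) ∈ Set.Icc (x / 2) x := by
  have hs₀ : 0 ≤ √(1 - x) := sqrt_nonneg _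
  have hs₁ : √(1 - x) ≤ 1 := sqrt_le_one.mpr (by linarith)
  have hsq : √(1 - x) ^ 2 = 1 - x := sq_sqrt (by linarith)
  refine ⟨?_, ?_⟩ <;> nlinarith

lemma neg_root_add_sqrt_mem_Icc {a b t : ℝ} (ha : 0 ≤ a) (hb : 0 < b) (ht : 0 ≤ t)
    (htb : 4 * t * b ≤ 1) :
    -(a / (2 * b) * (-1 + √(1 - 4 * t * b))) ∈ Set.Icc (a * t) (2 * (a * t)) := by
  obtain ⟨hlo, hhi⟩ := one_sub_sqrt_one_sub_mem_Icc (by positivity) htb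
  have hab : 0 ≤ a / (2 * b) := by positivity
  rw [show -(a / (2 * b) * (-1 + √(1 - 4 * t * b))) = a / (2 * b) * (1 - √(1 - 4 * t * b)) by ring]
  constructor
  · calc a * t = a / (2 * b) * (4 * t * b / 2) := by field_simp; ring
      _ ≤ _ := mul_le_mul_of_nonneg_left hlo hab
  · calc _ ≤ a / (2 * b) * (4 * t * b) := mul_le_mul_of_nonneg_left hhi hab
      _ = 2 * (a * t) := by field_simp; ring

lemma neg_root_sub_sqrt_mem_Icc {a b x : ℝ} (ha : 0 ≤ a) (hb₁ : 1 ≤ b) (hb₂ : b ≤ 2)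
    (hx : 0 ≤ x) :
    -(a / (2 * b) * (-1 - √(1 - x))) ∈ Set.Icc (a / 4) a := by
  have hs₀ : 0 ≤ √(1 - x) := sqrt_nonneg _
  have hs₁ : √(1 - x) ≤ 1 := sqrt_le_one.mpr (by linarith)
  rw [show -(a / (2 * b) * (-1 - √(1 - x))) = a * (1 + √(1 - x)) / (2 * b) by field_simp; ring]
  constructor
  · rw [le_div_iff₀ (by positivity)]; nlinarith
  · rw [div_le_iff₀ (by positivity)]; nlinarith

lemma exists_mem_Ioc_rpow_le {e ε : ℝ} (he : 0 < e) (hε : 0 < ε) :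
    ∃ ρ ∈ Set.Ioc (0 : ℝ) 1, ∀ r, 0 ≤ r → r ≤ ρ → r ^ e ≤ ε := by
  refine ⟨min 1 (ε ^ e⁻¹), ⟨lt_min one_pos (by positivity), min_le_left _ _⟩, fun r hr hrρ => ?_⟩
  calc r ^ e ≤ (ε ^ e⁻¹) ^ e := rpow_le_rpow hr (hrρ.trans (min_le_right _ _)) he.le
    _ = ε := rpow_inv_rpow hε.le he.ne'

theorem stmt_8_general (n : ℕ) (α θ δ : ℝ) (hα : 2 * θ < α) (hδ : 0 ≤ δ) :
    ∃ c₁ > (0:ℝ), ∃ c₂ > (0:ℝ), ∃ C₁ > (0:ℝ), ∃ C₂ > (0:ℝ), ∃ ρ ∈ Set.Ioc (0:ℝ) 1,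
      ∀ ξ : EuclideanSpace ℝ (Fin n), 0 < ‖ξ‖ → ‖ξ‖ ≤ ρ →
        let r := ‖ξ‖
        let D := 1 - 4 * r ^ (2 * (α - 2 * θ)) * (1 + r ^ (2 * δ))
        let lp := r ^ (2 * θ) / (2 * (1 + r ^ (2 * δ))) * (-1 + Real.sqrt D)
        let lm := r ^ (2 * θ) / (2 * (1 + r ^ (2 * δ))) * (-1 - Real.sqrt D)
        (c₁ * r ^ (2 * (α - θ)) ≤ -lp ∧ -lp ≤ C₁ * r ^ (2 * (α - θ))) ∧
        (c₂ * r ^ (2 * θ) ≤ -lm ∧ -lm ≤ C₂ * r ^ (2 * θ)) := by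
  obtain ⟨ρ, hρ, hsmall⟩ := exists_mem_Ioc_rpow_le (e := 2 * (α - 2 * θ)) (by linarith)
    (by norm_num : (0 : ℝ) < 1 / 8)
  refine ⟨1, one_pos, 1 / 4, by norm_num, 2, two_pos, 1, one_pos, ρ, hρ, fun ξ hr hrρ => ?_⟩
  intro r D lp lm
  have ht : r ^ (2 * (α - 2 * θ)) ≤ 1 / 8 := hsmall r hr.le hrρ
  have hs₀ : 0 ≤ r ^ (2 * δ) := by positivity
  have hs₁ : r ^ (2 * δ) ≤ 1 := rpow_le_one hr.le (hrρ.trans hρ.2) (by positivity)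
  have hx : 4 * r ^ (2 * (α - 2 * θ)) * (1 + r ^ (2 * δ)) ≤ 1 := by nlinarith
  have hexp : r ^ (2 * θ) * r ^ (2 * (α - 2 * θ)) = r ^ (2 * (α - θ)) := by
    rw [← rpow_add (show 0 < r from hr)]; ring_nf
  have hlp := neg_root_add_sqrt_mem_Icc (a := r ^ (2 * θ)) (b := 1 + r ^ (2 * δ))
    (by positivity) (by positivity) (by positivity) hx
  have hlm := neg_root_sub_sqrt_mem_Icc (a := r ^ (2 * θ)) (b := 1 + r ^ (2 * δ))
    (x := 4 * r ^ (2 * (α - 2 * θ)) * (1 + r ^ (2 * δ))) (by positivity) (by linarith) (by linarith)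
    (by positivity)
  rw [hexp] at hlp
  exact ⟨⟨by simpa only [one_mul] using hlp.1, hlp.2⟩,
    ⟨by simpa only [one_div, inv_mul_eq_div] using hlm.1, by simpa only [one_mul] using hlm.2⟩⟩

theorem stmt_8 (n : ℕ) (α θ δ : ℝ) (hθ : 0 ≤ θ) (hα : 2 * θ < α) (hδ : 0 ≤ δ) :
    ∃ c₁ > (0:ℝ), ∃ c₂ > (0:ℝ), ∃ C₁ > (0:ℝ), ∃ C₂ > (0:ℝ), ∃ ρ ∈ Set.Ioc (0:ℝ) 1,
      ∀ ξ : EuclideanSpace ℝ (Fin n), 0 < ‖ξ‖ → ‖ξ‖ ≤ ρ →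
        let r := ‖ξ‖
        let D := 1 - 4 * r ^ (2 * (α - 2 * θ)) * (1 + r ^ (2 * δ))
        let lp := r ^ (2 * θ) / (2 * (1 + r ^ (2 * δ))) * (-1 + Real.sqrt D)
        let lm := r ^ (2 * θ) / (2 * (1 + r ^ (2 * δ))) * (-1 - Real.sqrt D)
        (c₁ * r ^ (2 * (α - θ)) ≤ -lp ∧ -lp ≤ C₁ * r ^ (2 * (α - θ))) ∧
        (c₂ * r ^ (2 * θ) ≤ -lm ∧ -lm ≤ C₂ * r ^ (2 * θ)) :=
  stmt_8_general n α θ δ hα hδ
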